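/- arXiv:0910.1047 — 2 statements merged into one kernel-verified Lean document; each statement's English description precedes it below -/
import Mathlib

section
/- If an N×N matrix L(λ) over a Poisson algebra satisfies the Sklyanin algebra relation {L(λ) ⊗ 1, 1 ⊗ L(μ)} = [r(λ−μ), L(λ) ⊗ L(μ)] for a unitary r-matrix r, then the traces of powers are in involution: {Tr(L(λ)^p), Tr(L(μ)^q)} = 0 for all p, q ≥ 1 and all λ, μ. -/
open Kronecker

section Aux
variable {B : Type*} [CommRing B]

lemma aux_pb_zero (pb : B → B → B)
    (hadd : ∀ x y z : B, pb (x + y) z = pb x z + pb y z) (z : B) :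
    pb 0 z = 0 := by
  have h := hadd 0 0 z
  rw [add_zero] at h
  exact left_eq_add.mp h

lemma aux_pb_one (pb : B → B → B)
    (hleib : ∀ x y z : B, pb (x * y) z = x * pb y z + y * pb x z) (z : B) :
    pb 1 z = 0 := by
  have h := hleib 1 1 z
  simp only [mul_one, one_mul] at h
  exact left_eq_add.mp h

lemma aux_pb_sum (pb : B → B → B)
    (hadd : ∀ x y z : B, pb (x + y) z = pb x z + pb y z)
    {ι : Type*} (s : Finset ι) (f : ι → B) (z : B) :
    pb (∑ i ∈ s, f i) z = ∑ i ∈ s, pb (f i) z := by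
  classical
  induction s using Finset.induction_on with
  | empty => simpa using aux_pb_zero pb hadd z
  | insert _ _ h ih => rw [Finset.sum_insert h, Finset.sum_insert h, hadd, ih]

/-- entrywise derivative of a matrix -/
def dmat {N : ℕ} (pb : B → B → B) (x : B) (A : Matrix (Fin N) (Fin N) B) :
    Matrix (Fin N) (Fin N) B :=
  Matrix.of fun i j => pb (A i j) x

lemma dmat_mul {N : ℕ} (pb : B → B → B)
    (hadd : ∀ x y z : B, pb (x + y) z = pb x z + pb y z)
    (hleib : ∀ x y z : B, pb (x * y) z = x * pb y z + y * pb x z)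
    (x : B) (A C : Matrix (Fin N) (Fin N) B) :
    dmat pb x (A * C) = A * dmat pb x C + dmat pb x A * C := by
  ext i j
  simp only [dmat, Matrix.of_apply, Matrix.mul_apply, Matrix.add_apply]
  rw [aux_pb_sum pb hadd, ← Finset.sum_add_distrib]
  exact Finset.sum_congr rfl fun t _ => by rw [hleib]; ring

lemma dmat_pow {N : ℕ} (pb : B → B → B)
    (hadd : ∀ x y z : B, pb (x + y) z = pb x z + pb y z)
    (hleib : ∀ x y z : B, pb (x * y) z = x * pb y z + y * pb x z)
    (x : B) (M : Matrix (Fin N) (Fin N) B) (p : ℕ) :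
    dmat pb x (M ^ p) =
      ∑ a ∈ Finset.range p, M ^ a * dmat pb x M * M ^ (p - 1 - a) := by
  induction p with
  | zero =>
      simp only [pow_zero, Finset.range_zero, Finset.sum_empty]
      ext i j
      simp only [dmat, Matrix.of_apply, Matrix.one_apply, Matrix.zero_apply]
      split
      · exact aux_pb_one pb hleib x
      · exact aux_pb_zero pb hadd x
  | succ p ih =>
      rw [pow_succ, dmat_mul pb hadd hleib, ih, Finset.sum_range_succ,
        Finset.sum_mul]
      have h1 : M ^ p * dmat pb x M * M ^ (p + 1 - 1 - p) = M ^ p * dmat pb x M := by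
        simp
      rw [h1, add_comm]
      congr 1
      refine Finset.sum_congr rfl fun a ha => ?_
      have ha' : a < p := Finset.mem_range.mp ha
      rw [mul_assoc, ← pow_succ]
      have : p - 1 - a + 1 = p + 1 - 1 - a := by omega
      rw [this]

lemma pb_trace_pow {N : ℕ} (pb : B → B → B)
    (hadd : ∀ x y z : B, pb (x + y) z = pb x z + pb y z)
    (hleib : ∀ x y z : B, pb (x * y) z = x * pb y z + y * pb x z)
    (x : B) (M : Matrix (Fin N) (Fin N) B) (p : ℕ) (hp : 1 ≤ p) :
    pb (Matrix.trace (M ^ p)) x =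
      p • Matrix.trace (M ^ (p - 1) * dmat pb x M) := by
  have h0 : pb (Matrix.trace (M ^ p)) x = Matrix.trace (dmat pb x (M ^ p)) := by
    simp only [Matrix.trace, Matrix.diag]
    rw [aux_pb_sum pb hadd]
    rfl
  rw [h0, dmat_pow pb hadd hleib, Matrix.trace_sum]
  have h1 : ∀ a ∈ Finset.range p,
      Matrix.trace (M ^ a * dmat pb x M * M ^ (p - 1 - a)) =
        Matrix.trace (M ^ (p - 1) * dmat pb x M) := by
    intro a ha
    have ha' : a < p := Finset.mem_range.mp ha
    rw [Matrix.trace_mul_comm, ← mul_assoc, ← pow_add]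
    have h2 : p - 1 - a + a = p - 1 := by omega
    rw [h2]
  rw [Finset.sum_congr rfl h1, Finset.sum_const, Finset.card_range]

end Aux

/-- Conjugation by the flip operator `Π`: `(Π X Π)_{(i,k),(j,l)} = X_{(k,i),(l,j)}`. -/
def flipConj {B : Type*} (N : ℕ)
    (A : Matrix (Fin N × Fin N) (Fin N × Fin N) B) :
    Matrix (Fin N × Fin N) (Fin N × Fin N) B :=
  fun p q => A (p.2, p.1) (q.2, q.1)

/-- if the Lax matrix `L(λ)` satisfies the Sklyanin algebra relation
`{L(λ) ⊗ 1, 1 ⊗ L(μ)} = [r(λ−μ), L(λ) ⊗ L(μ)]` for a unitary `r`-matrix, then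
the traces of powers are in involution: `{Tr(L(λ)^p), Tr(L(μ)^q)} = 0` for all
`p, q ≥ 1` and all `λ, μ`. -/
theorem sklyanin_traces_in_involution {B : Type*} [CommRing B]
    (N : ℕ) {Λ : Type*} [AddCommGroup Λ] (pb : B → B → B)
    (hadd₁ : ∀ x y z : B, pb (x + y) z = pb x z + pb y z)
    (hadd₂ : ∀ x y z : B, pb x (y + z) = pb x y + pb x z)
    (hleib₁ : ∀ x y z : B, pb (x * y) z = x * pb y z + y * pb x z)
    (hleib₂ : ∀ x y z : B, pb x (y * z) = y * pb x z + z * pb x y)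
    (r : Λ → Matrix (Fin N × Fin N) (Fin N × Fin N) B)
    (hunit : ∀ ν : Λ, flipConj N (r ν) = -r (-ν))
    (L : Λ → Matrix (Fin N) (Fin N) B)
    (hSk : ∀ (lam mu : Λ) (i k j l : Fin N),
      pb (L lam i j) (L mu k l) =
        (r (lam - mu) * (L lam ⊗ₖ L mu) - (L lam ⊗ₖ L mu) * r (lam - mu)) (i, k) (j, l)) :
    ∀ (lam mu : Λ) (p q : ℕ), 1 ≤ p → 1 ≤ q →
      pb (Matrix.trace (L lam ^ p)) (Matrix.trace (L mu ^ q)) = 0 := by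
  intro lam mu p q hp hq
  classical
  have hadd' : ∀ x y z : B, (fun a b => pb b a) (x + y) z =
      (fun a b => pb b a) x z + (fun a b => pb b a) y z := fun x y z => hadd₂ z x y
  have hleib' : ∀ x y z : B, (fun a b => pb b a) (x * y) z =
      x * (fun a b => pb b a) y z + y * (fun a b => pb b a) x z := fun x y z => hleib₂ z x y
  set Lp := L lam ^ (p - 1) with hLp
  set Lq := L mu ^ (q - 1) with hLq
  set K := L lam ⊗ₖ L mu with hK
  set R := r (lam - mu) with hR
  set C := R * K - K * R with hC
  rw [pb_trace_pow pb hadd₁ hleib₁ _ _ p hp]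
  have hD : dmat pb (Matrix.trace (L mu ^ q)) (L lam) =
      q • Matrix.of (fun s t =>
        Matrix.trace (Lq * Matrix.of fun k l => C (s, k) (t, l))) := by
    ext s t
    show pb (L lam s t) (Matrix.trace (L mu ^ q)) = _
    have h := pb_trace_pow (fun a b => pb b a) hadd' hleib' (L lam s t) (L mu) q hq
    have hE : dmat (fun a b => pb b a) (L lam s t) (L mu) =
        Matrix.of fun k l => C (s, k) (t, l) := by
      ext k l
      show pb (L lam s t) (L mu k l) = _
      exact hSk lam mu s k t l
    rw [hE] at h
    exact h
  rw [hD, Matrix.mul_smul, Matrix.trace_smul]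
  have hkey : Matrix.trace (Lp * Matrix.of (fun s t =>
      Matrix.trace (Lq * Matrix.of fun k l => C (s, k) (t, l)))) =
      Matrix.trace ((Lp ⊗ₖ Lq) * C) := by
    simp only [Matrix.trace, Matrix.diag, Matrix.mul_apply, Matrix.of_apply,
      Fintype.sum_prod_type, Matrix.kroneckerMap_apply, Finset.mul_sum, Finset.sum_mul]
    refine Finset.sum_congr rfl fun t _ => ?_
    rw [Finset.sum_comm]
    exact Finset.sum_congr rfl fun v _ => Finset.sum_congr rfl fun s _ =>
      Finset.sum_congr rfl fun u _ => by ring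
  have hpow1 : L lam * Lp = Lp * L lam := by rw [hLp, ← pow_succ', ← pow_succ]
  have hpow2 : L mu * Lq = Lq * L mu := by rw [hLq, ← pow_succ', ← pow_succ]
  have hcomm : K * (Lp ⊗ₖ Lq) = (Lp ⊗ₖ Lq) * K := by
    rw [hK, ← Matrix.mul_kronecker_mul, ← Matrix.mul_kronecker_mul, hpow1, hpow2]
  have hzero : Matrix.trace ((Lp ⊗ₖ Lq) * C) = 0 := by
    rw [hC, Matrix.mul_sub, Matrix.trace_sub, ← mul_assoc,
      Matrix.trace_mul_comm ((Lp ⊗ₖ Lq) * R) K, ← mul_assoc, hcomm, ← mul_assoc, sub_self]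
  rw [hkey, hzero, smul_zero, smul_zero]
end

section
/- If an N×N matrix L(λ) over a Poisson algebra satisfies the reflection algebra relation {L(λ)⊗1, 1⊗L(μ)} = [r(λ−μ), L(λ)⊗L(μ)] + (L(λ)⊗1) r(λ+μ) (1⊗L(μ)) − (1⊗L(μ)) r(λ+μ) (L(λ)⊗1) for a unitary r-matrix r, then {Tr(L(λ)^p), Tr(L(μ)^q)} = 0 for all p, q ≥ 1 and all λ, μ. -/
open Kronecker
open Finset

section Helpers


variable {B : Type*} [CommRing B] {n : Type*} [Fintype n] [DecidableEq n]

lemma pbSum (D : B → B) (hadd : ∀ x y, D (x + y) = D x + D y)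
    {ι : Type*} (s : Finset ι) (f : ι → B) :
    D (∑ i ∈ s, f i) = ∑ i ∈ s, D (f i) := by
  have h0 : D 0 = 0 := by
    have h := hadd 0 0
    rw [add_zero] at h
    linear_combination -h
  induction s using Finset.cons_induction with
  | empty => simpa
  | cons a s ha ih => rw [Finset.sum_cons, hadd, ih, Finset.sum_cons]

lemma mapMulDeriv (D : B → B) (hadd : ∀ x y, D (x + y) = D x + D y)
    (hmul : ∀ x y, D (x * y) = x * D y + y * D x)
    (M N : Matrix n n B) :
    (M * N).map D = M * N.map D + M.map D * N := by
  ext i j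
  simp only [Matrix.map_apply, Matrix.mul_apply, Matrix.add_apply,
    pbSum D hadd, hmul, Finset.sum_add_distrib]
  congr 1
  exact Finset.sum_congr rfl fun k _ => mul_comm _ _

lemma mapPowDeriv (D : B → B) (hadd : ∀ x y, D (x + y) = D x + D y)
    (hmul : ∀ x y, D (x * y) = x * D y + y * D x)
    (M : Matrix n n B) (p : ℕ) :
    (M ^ (p + 1)).map D = ∑ a ∈ Finset.range (p + 1), M ^ a * M.map D * M ^ (p - a) := by
  induction p with
  | zero => simp
  | succ p ih =>
    rw [pow_succ, mapMulDeriv D hadd hmul, ih, Finset.sum_mul]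
    have h1 : ∀ a ∈ Finset.range (p + 1),
        M ^ a * M.map D * M ^ (p - a) * M = M ^ a * M.map D * M ^ (p + 1 - a) := by
      intro a ha
      rw [Finset.mem_range] at ha
      rw [mul_assoc (M ^ a * M.map D), ← pow_succ]
      have : p - a + 1 = p + 1 - a := by omega
      rw [this]
    rw [Finset.sum_congr rfl h1, Finset.sum_range_succ _ (p + 1)]
    have h2 : p + 1 - (p + 1) = 0 := by omega
    rw [h2, pow_zero, mul_one, add_comm]

lemma tracePowDeriv (D : B → B) (hadd : ∀ x y, D (x + y) = D x + D y)
    (hmul : ∀ x y, D (x * y) = x * D y + y * D x)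
    (M : Matrix n n B) (p : ℕ) :
    D ((M ^ (p + 1)).trace) = (p + 1) • (M ^ p * M.map D).trace := by
  have h1 : D ((M ^ (p + 1)).trace) = ((M ^ (p + 1)).map D).trace := by
    simp only [Matrix.trace, Matrix.diag, Matrix.map_apply]
    exact pbSum D hadd _ _
  rw [h1, mapPowDeriv D hadd hmul, Matrix.trace_sum]
  have h3 : ∀ a ∈ Finset.range (p + 1),
      (M ^ a * M.map D * M ^ (p - a)).trace = (M ^ p * M.map D).trace := by
    intro a ha
    rw [Finset.mem_range] at ha
    rw [Matrix.trace_mul_comm, ← mul_assoc, ← pow_add]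
    have : p - a + a = p := by omega
    rw [this]
  rw [Finset.sum_congr rfl h3, Finset.sum_const, Finset.card_range]

lemma traceMulKron (X Y : Matrix n n B) (C : Matrix (n × n) (n × n) B) :
    ((X ⊗ₖ Y) * C).trace
      = ∑ j, ∑ i, X j i * ∑ l, ∑ k, Y l k * C (i, k) (j, l) := by
  simp only [Matrix.trace, Matrix.diag, Matrix.mul_apply, Matrix.kroneckerMap_apply,
    Fintype.sum_prod_type, Finset.mul_sum]
  refine Finset.sum_congr rfl fun j _ => ?_
  rw [Finset.sum_comm]
  refine Finset.sum_congr rfl fun i _ => Finset.sum_congr rfl fun l _ =>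
    Finset.sum_congr rfl fun k _ => by ring

lemma keyTrace (X Y Lm Mm : Matrix n n B) (hX : X * Lm = Lm * X) (hY : Y * Mm = Mm * Y)
    (R S : Matrix (n × n) (n × n) B) :
    ((X ⊗ₖ Y) * (R * (Lm ⊗ₖ Mm) - (Lm ⊗ₖ Mm) * R
      + (Lm ⊗ₖ (1 : Matrix n n B)) * S * ((1 : Matrix n n B) ⊗ₖ Mm)
      - ((1 : Matrix n n B) ⊗ₖ Mm) * S * (Lm ⊗ₖ (1 : Matrix n n B)))).trace = 0 := by
  have h1 : ((X ⊗ₖ Y) * (R * (Lm ⊗ₖ Mm))).trace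
      = (((Lm * X) ⊗ₖ (Mm * Y)) * R).trace := by
    rw [← mul_assoc, Matrix.trace_mul_comm, ← mul_assoc, ← Matrix.mul_kronecker_mul]
  have h2 : ((X ⊗ₖ Y) * ((Lm ⊗ₖ Mm) * R)).trace
      = (((Lm * X) ⊗ₖ (Mm * Y)) * R).trace := by
    rw [← mul_assoc, ← Matrix.mul_kronecker_mul, hX, hY]
  have h3 : ((X ⊗ₖ Y) * ((Lm ⊗ₖ (1 : Matrix n n B)) * S * ((1 : Matrix n n B) ⊗ₖ Mm))).trace
      = (((Lm * X) ⊗ₖ (Mm * Y)) * S).trace := by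
    rw [← mul_assoc, Matrix.trace_mul_comm, ← mul_assoc, ← mul_assoc,
      ← Matrix.mul_kronecker_mul, ← Matrix.mul_kronecker_mul]
    rw [one_mul, mul_one, hX]
  have h4 : ((X ⊗ₖ Y) * (((1 : Matrix n n B) ⊗ₖ Mm) * S * (Lm ⊗ₖ (1 : Matrix n n B)))).trace
      = (((Lm * X) ⊗ₖ (Mm * Y)) * S).trace := by
    rw [← mul_assoc, Matrix.trace_mul_comm, ← mul_assoc, ← mul_assoc,
      ← Matrix.mul_kronecker_mul, ← Matrix.mul_kronecker_mul]
    rw [one_mul, mul_one, hY]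
  rw [mul_sub, mul_add, mul_sub, Matrix.trace_sub, Matrix.trace_add, Matrix.trace_sub,
    h1, h2, h3, h4]
  ring

end Helpers

/-- if the Lax matrix `L(λ)` satisfies the reflection algebra
relation `{L(λ)⊗1, 1⊗L(μ)} = [r(λ−μ), L(λ)⊗L(μ)]
+ (L(λ)⊗1) r(λ+μ) (1⊗L(μ)) − (1⊗L(μ)) r(λ+μ) (L(λ)⊗1)` for a unitary
`r`-matrix, then `{Tr(L(λ)^p), Tr(L(μ)^q)} = 0` for all `p, q ≥ 1`, `λ, μ`. -/
theorem reflection_traces_in_involution {B : Type*} [CommRing B]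
    (N : ℕ) {Λ : Type*} [AddCommGroup Λ] (pb : B → B → B)
    (hadd₁ : ∀ x y z : B, pb (x + y) z = pb x z + pb y z)
    (hadd₂ : ∀ x y z : B, pb x (y + z) = pb x y + pb x z)
    (hleib₁ : ∀ x y z : B, pb (x * y) z = x * pb y z + y * pb x z)
    (hleib₂ : ∀ x y z : B, pb x (y * z) = y * pb x z + z * pb x y)
    (r : Λ → Matrix (Fin N × Fin N) (Fin N × Fin N) B)
    (hunit : ∀ ν : Λ, flipConj N (r ν) = -r (-ν))
    (L : Λ → Matrix (Fin N) (Fin N) B)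
    (hRefl : ∀ (lam mu : Λ) (i k j l : Fin N),
      pb (L lam i j) (L mu k l) =
        (r (lam - mu) * (L lam ⊗ₖ L mu) - (L lam ⊗ₖ L mu) * r (lam - mu)
         + (L lam ⊗ₖ (1 : Matrix (Fin N) (Fin N) B)) * r (lam + mu)
             * ((1 : Matrix (Fin N) (Fin N) B) ⊗ₖ L mu)
         - ((1 : Matrix (Fin N) (Fin N) B) ⊗ₖ L mu) * r (lam + mu)
             * (L lam ⊗ₖ (1 : Matrix (Fin N) (Fin N) B))) (i, k) (j, l)) :
    ∀ (lam mu : Λ) (p q : ℕ), 1 ≤ p → 1 ≤ q →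
      pb (Matrix.trace (L lam ^ p)) (Matrix.trace (L mu ^ q)) = 0 := by
  intro lam mu p q hp hq
  obtain ⟨p', rfl⟩ : ∃ p0, p = p0 + 1 := ⟨p - 1, by omega⟩
  obtain ⟨q', rfl⟩ : ∃ q0, q = q0 + 1 := ⟨q - 1, by omega⟩
  -- the matrix from the reflection relation
  set C : Matrix (Fin N × Fin N) (Fin N × Fin N) B :=
    r (lam - mu) * (L lam ⊗ₖ L mu) - (L lam ⊗ₖ L mu) * r (lam - mu)
      + (L lam ⊗ₖ (1 : Matrix (Fin N) (Fin N) B)) * r (lam + mu)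
          * ((1 : Matrix (Fin N) (Fin N) B) ⊗ₖ L mu)
      - ((1 : Matrix (Fin N) (Fin N) B) ⊗ₖ L mu) * r (lam + mu)
          * (L lam ⊗ₖ (1 : Matrix (Fin N) (Fin N) B)) with hCdef
  have step1 := tracePowDeriv (fun y => pb y ((L mu ^ (q' + 1)).trace))
    (fun x y => hadd₁ x y _) (fun x y => hleib₁ x y _) (L lam) p'
  rw [step1]
  have hkey : (((L lam ^ p') ⊗ₖ (L mu ^ q')) * C).trace = 0 := by
    rw [hCdef]
    exact keyTrace _ _ _ _ (by rw [← pow_succ, ← pow_succ'])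
      (by rw [← pow_succ, ← pow_succ']) _ _
  have step3 : (L lam ^ p' * (L lam).map fun y => pb y ((L mu ^ (q' + 1)).trace)).trace
      = (q' + 1) • (((L lam ^ p') ⊗ₖ (L mu ^ q')) * C).trace := by
    rw [traceMulKron, Finset.smul_sum]
    have e1 : (L lam ^ p' * (L lam).map fun y => pb y ((L mu ^ (q' + 1)).trace)).trace
        = ∑ j, ∑ i, (L lam ^ p') j i * pb (L lam i j) ((L mu ^ (q' + 1)).trace) := by
      simp [Matrix.trace, Matrix.diag, Matrix.mul_apply, Matrix.map_apply]
    rw [e1]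
    refine Finset.sum_congr rfl fun j _ => ?_
    rw [Finset.smul_sum]
    refine Finset.sum_congr rfl fun i _ => ?_
    have e2 : pb (L lam i j) ((L mu ^ (q' + 1)).trace)
        = (q' + 1) • ∑ l, ∑ k, (L mu ^ q') l k * C (i, k) (j, l) := by
      have h := tracePowDeriv (pb (L lam i j)) (fun x y => hadd₂ (L lam i j) x y)
        (fun x y => hleib₂ (L lam i j) x y) (L mu) q'
      rw [h]
      congr 1
      have e3 : (L mu ^ q' * (L mu).map (pb (L lam i j))).trace
          = ∑ l, ∑ k, (L mu ^ q') l k * pb (L lam i j) (L mu k l) := by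
        simp [Matrix.trace, Matrix.diag, Matrix.mul_apply, Matrix.map_apply]
      rw [e3]
      refine Finset.sum_congr rfl fun l _ => Finset.sum_congr rfl fun k _ => ?_
      rw [hRefl lam mu i k j l, hCdef]
    rw [e2, mul_smul_comm]
  rw [step3, hkey, smul_zero, smul_zero]
end
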